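/- The stuttering construction preserves non-stuttering paths: for any Kripke structure K, the stuttered Kripke structure K' (which adds a self-loop 'stutter' copy to every state and marks each transition as 'stutter' or 'move') has the property that a path of K' satisfying □◇move_π projects (by deleting stutter steps) to a path of K, and conversely every path of K lifts to such a path of K'. -/

import Mathlib

/-- A Kripke structure. -/
structure Kripke (S AP : Type) where
  init : S
  trans : S → Set S
  label : S → Set AP

/-- Paths of a Kripke structure from a state `s`. -/
def PathsFrom {S AP : Type} (K : Kripke S AP) (s : S) : Set (ℕ → S × Set AP) :=
  {π | (π 0).1 = s ∧ (∀ i, (π (i+1)).1 ∈ K.trans (π i).1) ∧ ∀ i, (π i).2 = K.label (π i).1}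

/-- Markers for stutter and move transitions. -/
inductive SM : Type
  | stutter
  | move
deriving DecidableEq

/-- The stuttered Kripke structure `K'`: every state gets a stuttering self-loop copy,
and each transition is marked `stutter` or `move` (the marker is added to the label). -/
def stutterK {S AP : Type} (K : Kripke S AP) : Kripke (S × SM) (AP ⊕ SM) where
  init := (K.init, SM.stutter)
  trans := fun p => {q | (∃ s' ∈ K.trans p.1, q = (s', SM.move)) ∨ q = (p.1, SM.stutter)}
  label := fun p => Sum.inl '' K.label p.1 ∪ {Sum.inr p.2}

/-- the stuttering construction preserves non-stuttering paths: every path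
of `K'` satisfying `□◇move` projects (by deleting stutter steps, keeping position `0`
and the move positions) to a path of `K`, and conversely every path of `K` lifts to such
a path of `K'`. -/
theorem stutterK_paths {S AP : Type} (K : Kripke S AP) :
    (∀ π' ∈ PathsFrom (stutterK K) (stutterK K).init,
      (∀ n, ∃ m, n ≤ m ∧ (π' m).1.2 = SM.move) →
        ∃ π ∈ PathsFrom K K.init, ∃ f : ℕ → ℕ, StrictMono f ∧
          Set.range f = {0} ∪ {n | (π' n).1.2 = SM.move} ∧
          ∀ k, (π k).1 = (π' (f k)).1.1) ∧
    (∀ π ∈ PathsFrom K K.init,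
      ∃ π' ∈ PathsFrom (stutterK K) (stutterK K).init,
        (∀ n, ∃ m, n ≤ m ∧ (π' m).1.2 = SM.move) ∧
        ∃ f : ℕ → ℕ, StrictMono f ∧
          Set.range f = {0} ∪ {n | (π' n).1.2 = SM.move} ∧
          ∀ k, (π k).1 = (π' (f k)).1.1) := by
  constructor
  · rintro π' ⟨h0, hstep, _⟩ hmove
    set p : ℕ → Prop := fun n => n = 0 ∨ (π' n).1.2 = SM.move with hp
    have hinf : (setOf p).Infinite := by
      apply Set.infinite_of_not_bddAbove
      rintro ⟨b, hb⟩
      obtain ⟨m, hm, hmv⟩ := hmove (b + 1)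
      have : m ≤ b := hb (Or.inr hmv)
      omega
    set f := Nat.nth p with hf
    have hmono : StrictMono f := Nat.nth_strictMono hinf
    have hrange : Set.range f = setOf p := Nat.range_nth_of_infinite hinf
    have hf0 : f 0 = 0 := by
      rw [hf, Nat.nth_zero]
      exact Nat.sInf_eq_zero.2 (Or.inl (Or.inl rfl))
    have hgap : ∀ k m, f k < m → m < f (k + 1) → ¬ p m := by
      intro k m h1 h2 hpm
      have : m ∈ Set.range f := hrange ▸ hpm
      obtain ⟨j, hj⟩ := this
      rw [← hj] at h1 h2
      have := hmono.lt_iff_lt.mp h1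
      have := hmono.lt_iff_lt.mp h2
      omega
    have hconst : ∀ k j, f k ≤ j → j < f (k + 1) → (π' j).1.1 = (π' (f k)).1.1 := by
      intro k j
      induction j with
      | zero => intro h1 _; have : f k = 0 := Nat.le_zero.mp h1; rw [this]
      | succ j ih =>
        intro h1 h2
        rcases Nat.lt_or_ge j (f k) with hlt | hge
        · have : f k = j + 1 := by omega
          rw [this]
        · have hnp : ¬ p (j + 1) := hgap k (j + 1) (by omega) h2
          rcases hstep j with ⟨s', _, heq⟩ | heq
          · exact absurd (Or.inr (by rw [heq])) hnp
          · rw [heq]; exact ih hge (by omega)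
    refine ⟨fun k => ((π' (f k)).1.1, K.label (π' (f k)).1.1), ⟨?_, ?_, fun i => rfl⟩,
      f, hmono, ?_, fun k => rfl⟩
    · simp only [hf0]
      rw [show (π' 0).1 = (stutterK K).init from h0]
      rfl
    · intro k
      have hlt : f k < f (k + 1) := hmono (by omega)
      have hne : f (k + 1) ≠ 0 := by
        have : f 0 < f (k + 1) := hmono (by omega)
        omega
      have hpm : p (f (k + 1)) := Nat.nth_mem_of_infinite hinf (k + 1)
      have hmv : (π' (f (k + 1))).1.2 = SM.move := hpm.resolve_left hne
      obtain ⟨m, hm⟩ : ∃ m, f (k + 1) = m + 1 := ⟨f (k + 1) - 1, by omega⟩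
      rcases hstep m with ⟨s', hs', heq⟩ | heq
      · have h1 : (π' m).1.1 = (π' (f k)).1.1 := hconst k m (by omega) (by omega)
        have : (π' (f (k + 1))).1.1 = s' := by rw [hm, heq]
        rw [this, ← h1]; exact hs'
      · exfalso
        rw [hm] at hmv
        rw [heq] at hmv
        exact SM.noConfusion hmv
    · rw [hrange]
      ext n
      simp [hp, Set.mem_union, Set.mem_singleton_iff]
      exact Iff.rfl
  · rintro π ⟨h0, hstep, _⟩
    set g : ℕ → S × SM := fun n => ((π n).1, if n = 0 then SM.stutter else SM.move) with hg
    refine ⟨fun n => (g n, (stutterK K).label (g n)), ⟨?_, ?_, fun i => rfl⟩, ?_, id,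
      strictMono_id, ?_, fun k => rfl⟩
    · show g 0 = (stutterK K).init
      simp [hg, h0, stutterK]
    · intro i
      left
      exact ⟨(π (i + 1)).1, by simpa [hg] using hstep i, by simp [hg]⟩
    · intro n
      exact ⟨n + 1, by omega, by simp [hg]⟩
    · ext n
      rcases Nat.eq_zero_or_pos n with h | h
      · simp [h]
      · have : n ≠ 0 := by omega
        simp [hg, this]
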